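/- arXiv:2001.09568 — 4 statements merged into one kernel-verified Lean document; each statement's English description precedes it below -/
import Mathlib

section
/- As formal power series, the infinite product over j ≥ 1 of (1 + q^j) equals the infinite product over j ≥ 1 of 1/(1 - q^{2j-1}). -/
open PowerSeries Finset

local notation "QX" => PowerSeries ℚ

private lemma odd_even_split (N : ℕ) :
    (∏ j ∈ Finset.Icc 1 N, (1 - (PowerSeries.X : QX) ^ j)) =
      (∏ j ∈ Finset.Icc 1 ((N + 1) / 2), (1 - (PowerSeries.X : QX) ^ (2 * j - 1))) *
        ∏ j ∈ Finset.Icc 1 (N / 2), (1 - (PowerSeries.X : QX) ^ (2 * j)) := by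
  induction N with
  | zero => simp
  | succ n ih =>
    rw [Finset.prod_Icc_succ_top (by omega : 1 ≤ n + 1)]
    rcases Nat.even_or_odd n with ⟨m, hm⟩ | ⟨m, hm⟩
    · -- n = m + m, n+1 odd: odd part gains factor
      rw [show (n + 1) / 2 = m from by omega, show n / 2 = m from by omega] at ih
      rw [show (n + 1 + 1) / 2 = m + 1 from by omega,
        show (n + 1) / 2 = m from by omega, ih,
        Finset.prod_Icc_succ_top (f := fun j => (1 - (PowerSeries.X : QX) ^ (2 * j - 1)))
          (by omega : 1 ≤ m + 1),
        show 2 * (m + 1) - 1 = n + 1 from by omega]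
      ring
    · -- n = 2m+1, n+1 even: even part gains factor
      rw [show (n + 1) / 2 = m + 1 from by omega, show n / 2 = m from by omega] at ih
      rw [show (n + 1 + 1) / 2 = m + 1 from by omega,
        show (n + 1) / 2 = m + 1 from by omega, ih,
        Finset.prod_Icc_succ_top (f := fun j => (1 - (PowerSeries.X : QX) ^ (2 * j)))
          (by omega : 1 ≤ m + 1),
        show 2 * (m + 1) = n + 1 from by omega]
      ring

private lemma prod_dvd_sub_one {s : Finset ℕ} {f : ℕ → QX} {m : ℕ}
    (h : ∀ j ∈ s, (PowerSeries.X : QX) ^ m ∣ f j - 1) :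
    (PowerSeries.X : QX) ^ m ∣ (∏ j ∈ s, f j) - 1 := by
  classical
  induction s using Finset.induction with
  | empty => simp
  | @insert a s ha ih =>
    rw [Finset.prod_insert ha]
    have h1 : (PowerSeries.X : QX) ^ m ∣ f a - 1 := h a (Finset.mem_insert_self a s)
    have h2 : (PowerSeries.X : QX) ^ m ∣ (∏ j ∈ s, f j) - 1 :=
      ih fun j hj => h j (Finset.mem_insert_of_mem hj)
    have : f a * ∏ j ∈ s, f j - 1 =
        (f a - 1) * ∏ j ∈ s, f j + ((∏ j ∈ s, f j) - 1) := by ring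
    rw [this]
    exact dvd_add (Dvd.dvd.mul_right h1 _) h2

/-- Euler's product identity: as formal power series,
`∏_{j≥1} (1 + q^j) = ∏_{j≥1} 1/(1 - q^{2j-1})`, expressed coefficientwise via
truncated products (for `n ≤ N` the coefficient of `q^n` is already stable). -/
theorem euler_product_identity (n N : ℕ) (hn : n ≤ N) :
    PowerSeries.coeff n
      (∏ j ∈ Finset.Icc 1 N, (1 + PowerSeries.X ^ j : PowerSeries ℚ)) =
    PowerSeries.coeff n
      (∏ j ∈ Finset.Icc 1 N, (1 - PowerSeries.X ^ (2 * j - 1) : PowerSeries ℚ)⁻¹) := by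
  set P : QX := ∏ j ∈ Finset.Icc 1 N, (1 + PowerSeries.X ^ j) with hP
  set Q : QX := ∏ j ∈ Finset.Icc 1 N, (1 - PowerSeries.X ^ (2 * j - 1)) with hQ
  set R : QX := ∏ j ∈ Finset.Icc 1 N, (1 - PowerSeries.X ^ (2 * j - 1))⁻¹ with hR
  have hconst : ∀ k : ℕ, 1 ≤ k →
      constantCoeff (1 - PowerSeries.X ^ k : QX) = 1 := by
    intro k hk
    simp [constantCoeff_X, zero_pow (by omega : k ≠ 0)]
  -- Q * R = 1
  have hQR : Q * R = 1 := by
    rw [hQ, hR, ← Finset.prod_mul_distrib]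
    apply Finset.prod_eq_one
    intro j hj
    have hj1 : 1 ≤ j := (Finset.mem_Icc.mp hj).1
    exact PowerSeries.mul_inv_cancel _ (by rw [hconst (2 * j - 1) (by omega)]; norm_num)
  -- key: X^(N+1) ∣ P * Q - 1
  have key : (PowerSeries.X : QX) ^ (N + 1) ∣ P * Q - 1 := by
    set K := (N + 1) / 2 with hK
    set M := N / 2 with hM
    set E : QX := ∏ j ∈ Finset.Icc 1 M, (1 - PowerSeries.X ^ (2 * j)) with hE
    set Q₁ : QX := ∏ j ∈ Finset.Icc 1 K, (1 - PowerSeries.X ^ (2 * j - 1)) with hQ₁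
    set Q₂ : QX := ∏ j ∈ Finset.Icc (K + 1) N, (1 - PowerSeries.X ^ (2 * j - 1)) with hQ₂
    set A : QX := ∏ j ∈ Finset.Icc (M + 1) N, (1 - PowerSeries.X ^ (2 * j)) with hA
    have hKN : K ≤ N := by omega
    have hMN : M ≤ N := by omega
    -- Q = Q₁ * Q₂
    have hQsplit : Q = Q₁ * Q₂ := by
      rw [hQ, hQ₁, hQ₂]
      rw [show (1 : ℕ) = 0 + 1 from rfl, Finset.Icc_add_one_left_eq_Ioc, show K + 1 = K.succ from rfl,
        Finset.Icc_add_one_left_eq_Ioc, show Finset.Icc K.succ N = Finset.Ioc K N from Finset.Icc_add_one_left_eq_Ioc K N]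
      exact (Finset.prod_Ioc_consecutive _ (Nat.zero_le K) hKN).symm
    -- C = E * A
    have hCsplit : (∏ j ∈ Finset.Icc 1 N, (1 - (PowerSeries.X : QX) ^ (2 * j))) = E * A := by
      rw [hE, hA]
      rw [show (1 : ℕ) = 0 + 1 from rfl, Finset.Icc_add_one_left_eq_Ioc, show M + 1 = M.succ from rfl,
        Finset.Icc_add_one_left_eq_Ioc, show Finset.Icc M.succ N = Finset.Ioc M N from Finset.Icc_add_one_left_eq_Ioc M N]
      exact (Finset.prod_Ioc_consecutive _ (Nat.zero_le M) hMN).symm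
    -- P * (Q₁ * E) = C
    have hPD : P * (Q₁ * E) = ∏ j ∈ Finset.Icc 1 N, (1 - (PowerSeries.X : QX) ^ (2 * j)) := by
      rw [← odd_even_split, hP, ← Finset.prod_mul_distrib]
      apply Finset.prod_congr rfl
      intro j hj
      ring_nf
    have hE0 : E ≠ 0 := by
      rw [hE]
      apply Finset.prod_ne_zero_iff.mpr
      intro j hj
      intro hcontra
      have := hconst (2 * j) (by have := (Finset.mem_Icc.mp hj).1; omega)
      rw [hcontra] at this
      simp at this
    -- P * Q = A * Q₂
    have hPQ : P * Q = A * Q₂ := by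
      have : P * Q * E = A * Q₂ * E := by
        rw [hQsplit]
        calc P * (Q₁ * Q₂) * E = P * (Q₁ * E) * Q₂ := by ring
        _ = (E * A) * Q₂ := by rw [hPD, hCsplit]
        _ = A * Q₂ * E := by ring
      exact mul_right_cancel₀ hE0 this
    have hA1 : (PowerSeries.X : QX) ^ (N + 1) ∣ A - 1 := by
      apply prod_dvd_sub_one
      intro j hj
      have hj1 := (Finset.mem_Icc.mp hj).1
      have : (1 - (PowerSeries.X : QX) ^ (2 * j)) - 1 = -(PowerSeries.X ^ (2 * j)) := by ring
      rw [this, dvd_neg]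
      exact pow_dvd_pow _ (by omega)
    have hQ₂1 : (PowerSeries.X : QX) ^ (N + 1) ∣ Q₂ - 1 := by
      apply prod_dvd_sub_one
      intro j hj
      have hj1 := (Finset.mem_Icc.mp hj).1
      have : (1 - (PowerSeries.X : QX) ^ (2 * j - 1)) - 1 =
          -(PowerSeries.X ^ (2 * j - 1)) := by ring
      rw [this, dvd_neg]
      exact pow_dvd_pow _ (by omega)
    rw [hPQ]
    have : A * Q₂ - 1 = (A - 1) * Q₂ + (Q₂ - 1) := by ring
    rw [this]
    exact dvd_add (hA1.mul_right _) hQ₂1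
  -- conclude
  have hfinal : (PowerSeries.X : QX) ^ (N + 1) ∣ P - R := by
    have : P - R = (P * Q - 1) * R := by
      calc P - R = P * (Q * R) - R := by rw [hQR]; ring
      _ = (P * Q - 1) * R := by ring
    rw [this]
    exact key.mul_right R
  have := PowerSeries.X_pow_dvd_iff.mp hfinal n (by omega)
  rw [map_sub] at this
  linarith
end

section
/- Let j ≥ 2 be an integer. For every nonnegative integer n, the number of partitions of n in which no part appears more than j−1 times equals the number of partitions of n in which no part is a multiple of j. -/
open Finset

theorem Nat.Partition.mem_countRestricted_iff {n m : ℕ} (hm : 0 < m) {p : n.Partition} :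
    p ∈ countRestricted n m ↔ ∀ i, p.parts.count i ≤ m - 1 := by
  simp only [countRestricted, mem_filter, mem_univ, true_and]
  refine ⟨fun h i => ?_, fun h i _ => by have := h i; omega⟩
  by_cases hi : i ∈ p.parts
  · have := h i hi; omega
  · simp [Multiset.count_eq_zero_of_notMem hi]

/-- Glaisher's theorem: for `j ≥ 2`, the number of partitions of `n` in which no
part appears more than `j - 1` times equals the number of `j`-regular partitions
of `n` (those in which no part is a multiple of `j`). -/
theorem glaisher (j n : ℕ) (hj : 2 ≤ j) :
    Nat.card {p : Nat.Partition n // ∀ i, p.parts.count i ≤ j - 1} =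
    Nat.card {p : Nat.Partition n // ∀ i ∈ p.parts, ¬ j ∣ i} := by
  classical
  have hj0 : 0 < j := by omega
  simp only [Nat.card_eq_fintype_card, Fintype.card_subtype]
  convert (Nat.Partition.card_restricted_eq_card_countRestricted n hj0).symm using 2
  · ext p
    simp [Nat.Partition.mem_countRestricted_iff hj0]
  · rfl
end

section
/- Let h/k be a fraction in the Farey sequence of order N with predecessor h_p/k_p and successor h_s/k_s, and define z_I(h,k) = k/(k² + k_p²) + i·k_p/(k² + k_p²) and z_T(h,k) = k/(k² + k_s²) − i·k_s/(k² + k_s²). Then |z_I(h,k)| ≤ √2 / N and |z_T(h,k)| ≤ √2 / N. -/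
lemma aux_abs (a b : ℕ) (ε : ℝ) (hε : ε = 1 ∨ ε = -1)
    (hd : ((a:ℝ)^2 + b^2) > 0) :
    ‖(a : ℂ) / (a ^ 2 + b ^ 2) + ε * Complex.I * b / (a ^ 2 + b ^ 2)‖ =
      (Real.sqrt ((a:ℝ) ^ 2 + b ^ 2))⁻¹ := by
  have h1 : (a : ℂ) / (a ^ 2 + b ^ 2) + (ε:ℂ) * Complex.I * b / (a ^ 2 + b ^ 2)
      = ((a:ℝ) + ((ε*b : ℝ):ℝ)*Complex.I) / (((a:ℝ)^2 + (b:ℝ)^2 : ℝ) : ℂ) := by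
    push_cast; ring
  have hε2 : (ε*b)^2 = (b:ℝ)^2 := by rcases hε with h | h <;> rw [h] <;> ring
  rw [h1, norm_div, Complex.norm_add_mul_I, Complex.norm_real, Real.norm_eq_abs, abs_of_pos hd, hε2]
  field_simp
  exact Real.sq_sqrt hd.le

lemma aux_bound (N a b : ℕ) (hN1 : 1 ≤ N) (hN : N < a + b)
    (hd : ((a:ℝ)^2 + b^2) > 0) :
    (Real.sqrt ((a:ℝ) ^ 2 + b ^ 2))⁻¹ ≤ Real.sqrt 2 / N := by
  have hab : (N:ℝ) < a + b := by exact_mod_cast hN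
  have hN2 : (N:ℝ)^2 ≤ 2 * ((a:ℝ)^2 + b^2) := by
    nlinarith [sq_nonneg ((a:ℝ) - b), Nat.cast_nonneg (α := ℝ) N]
  have hs : Real.sqrt ((a:ℝ)^2+b^2) > 0 := Real.sqrt_pos.mpr hd
  have hNpos : (0:ℝ) < N := by exact_mod_cast hN1
  rw [inv_eq_one_div, div_le_div_iff₀ hs hNpos, one_mul,
     ← Real.sqrt_sq hNpos.le, ← Real.sqrt_mul (by norm_num : (0:ℝ) ≤ 2)]
  exact Real.sqrt_le_sqrt hN2

/-- Bound on the tangency points in the z-plane: if `h/k` lies in the Farey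
sequence of order `N` with neighboring denominators `k_p`, `k_s` (so
`k + k_p > N`, `k + k_s > N` and all denominators are between 1 and `N`), then
`|z_I(h,k)| ≤ √2/N` and `|z_T(h,k)| ≤ √2/N`. -/
theorem tangency_points_bound (N k kp ks : ℕ)
    (hk : 1 ≤ k) (hkp : 1 ≤ kp) (hks : 1 ≤ ks)
    (hkN : k ≤ N) (hkpN : kp ≤ N) (hksN : ks ≤ N)
    (hp : N < k + kp) (hs : N < k + ks) :
    ‖(k : ℂ) / (k ^ 2 + kp ^ 2) + Complex.I * kp / (k ^ 2 + kp ^ 2)‖ ≤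
      Real.sqrt 2 / N ∧
    ‖(k : ℂ) / (k ^ 2 + ks ^ 2) - Complex.I * ks / (k ^ 2 + ks ^ 2)‖ ≤
      Real.sqrt 2 / N := by
  have hN1 : 1 ≤ N := hk.trans hkN
  have hd1 : ((k:ℝ)^2 + kp^2) > 0 := by positivity
  have hd2 : ((k:ℝ)^2 + ks^2) > 0 := by positivity
  constructor
  · have e : (k : ℂ) / (k ^ 2 + kp ^ 2) + Complex.I * kp / (k ^ 2 + kp ^ 2)
        = (k : ℂ) / (k ^ 2 + kp ^ 2) + ((1:ℝ):ℂ) * Complex.I * kp / (k ^ 2 + kp ^ 2) := by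
      push_cast; ring
    rw [e, aux_abs k kp 1 (Or.inl rfl) hd1]
    exact aux_bound N k kp hN1 hp hd1
  · have e : (k : ℂ) / (k ^ 2 + ks ^ 2) - Complex.I * ks / (k ^ 2 + ks ^ 2)
        = (k : ℂ) / (k ^ 2 + ks ^ 2) + ((-1:ℝ):ℂ) * Complex.I * ks / (k ^ 2 + ks ^ 2) := by
      push_cast; ring
    rw [e, aux_abs k ks (-1) (Or.inr rfl) hd2]
    exact aux_bound N k ks hN1 hs hd2
end

section
/- On the closed line segment joining z_I(h,k) and z_T(h,k) (points of tangency of C(h,k) with its Farey neighbors, transformed to the z-plane), every point z satisfies Re(z) ≤ 1/k and Re(1/z) ≥ k. -/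
/-!
Both endpoints are images under `w ↦ w⁻¹` of points on the line `Re w = k`, namely `k - i k_p` and
`k + i k_s`, so they lie on the circle `k |z|² = Re z` through `0` of radius `1/(2k)`. The closed
disk it bounds is convex, and so is the half-plane `Re z > 0`, which contains both endpoints; hence
the whole segment lies in the punctured disk, where `k |z|² ≤ Re z` gives both bounds at once.
-/

open Complex

theorem mul_normSq_le_re_iff_mem_closedBall {k : ℝ} (hk : 0 < k) (w : ℂ) :
    k * normSq w ≤ w.re ↔ w ∈ Metric.closedBall ((2 * k)⁻¹ : ℂ) (2 * k)⁻¹ := by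
  have hr : (0 : ℝ) ≤ (2 * k)⁻¹ := by positivity
  rw [Metric.mem_closedBall, dist_eq, ← sq_le_sq₀ (norm_nonneg _) hr, Complex.sq_norm,
    normSq_apply, normSq_apply]
  simp only [sub_re, sub_im, ← ofReal_ofNat, ← ofReal_mul, ← ofReal_inv, ofReal_re, ofReal_im,
    sub_zero]
  constructor <;> intro h
  · field_simp
    nlinarith
  · field_simp at h
    nlinarith

theorem convex_setOf_mul_normSq_le_re {k : ℝ} (hk : 0 < k) :
    Convex ℝ {w : ℂ | k * normSq w ≤ w.re} := by
  simpa only [mul_normSq_le_re_iff_mem_closedBall hk, Set.ofPred_mem_eq] using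
    convex_closedBall _ _

theorem re_inv_pos_and_mul_normSq_inv_eq {w : ℂ} {k : ℝ} (hk : 0 < k) (hw : w.re = k) :
    0 < w⁻¹.re ∧ k * normSq w⁻¹ = w⁻¹.re := by
  have hn : 0 < normSq w := normSq_pos.2 fun h0 => by simp [h0] at hw; linarith
  refine ⟨?_, ?_⟩
  · rw [inv_re, hw]
    positivity
  · rw [normSq_inv, inv_re, hw, div_eq_mul_inv]

theorem re_le_inv_and_le_re_one_div {k : ℝ} (hk : 0 < k) {w : ℂ} (hw : 0 < w.re)
    (h : k * normSq w ≤ w.re) : w.re ≤ 1 / k ∧ k ≤ (1 / w).re := by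
  have hn : 0 < normSq w := normSq_pos.2 fun h0 => by simp [h0] at hw
  refine ⟨?_, ?_⟩
  · rw [normSq_apply] at h
    rw [le_div_iff₀ hk]
    nlinarith [mul_nonneg hk.le (sq_nonneg w.im)]
  · rwa [one_div, inv_re, le_div_iff₀ hn]

theorem ofReal_div_add_I_mul_div_eq_inv (a b : ℝ) :
    (a : ℂ) / (a ^ 2 + b ^ 2) + I * b / (a ^ 2 + b ^ 2) = (a - b * I)⁻¹ := by
  have hn : normSq (a - b * I) = a ^ 2 + b ^ 2 := by
    simp only [normSq_apply, sub_re, ofReal_re, mul_re, I_re, mul_zero, ofReal_im, I_im, mul_one,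
      sub_self, sub_zero, sub_im, mul_im, add_zero, zero_sub, mul_neg, neg_mul, neg_neg]
    ring
  rw [inv_def, hn, map_sub, conj_ofReal, map_mul, conj_ofReal, conj_I]
  push_cast
  ring

theorem segment_re_bounds_general (k kp ks : ℕ) (hk : 1 ≤ k)
    (z : ℂ)
    (hz : z ∈ segment ℝ
      ((k : ℂ) / (k ^ 2 + kp ^ 2) + Complex.I * kp / (k ^ 2 + kp ^ 2))
      ((k : ℂ) / (k ^ 2 + ks ^ 2) - Complex.I * ks / (k ^ 2 + ks ^ 2))) :
    z.re ≤ 1 / k ∧ (k : ℝ) ≤ (1 / z).re := by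
  have hk0 : (0 : ℝ) < k := by exact_mod_cast hk
  have hzI : (k : ℂ) / (k ^ 2 + kp ^ 2) + I * kp / (k ^ 2 + kp ^ 2) = ((k : ℂ) - kp * I)⁻¹ := by
    simpa using ofReal_div_add_I_mul_div_eq_inv k kp
  have hzT : (k : ℂ) / (k ^ 2 + ks ^ 2) - I * ks / (k ^ 2 + ks ^ 2) = ((k : ℂ) + ks * I)⁻¹ := by
    simpa [mul_neg, ← sub_eq_add_neg, neg_div] using ofReal_div_add_I_mul_div_eq_inv k (-ks)
  set S : Set ℂ := {w | 0 < w.re} ∩ {w | (k : ℝ) * normSq w ≤ w.re}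
  have hS : Convex ℝ S := (convex_halfSpace_re_gt 0).inter (convex_setOf_mul_normSq_le_re hk0)
  have hinv_mem : ∀ w : ℂ, w.re = k → w⁻¹ ∈ S := fun w hw =>
    (re_inv_pos_and_mul_normSq_inv_eq hk0 hw).imp id le_of_eq
  rw [hzI, hzT] at hz
  obtain ⟨hre, hdisk⟩ := hS.segment_subset (hinv_mem _ (by simp)) (hinv_mem _ (by simp)) hz
  exact re_le_inv_and_le_re_one_div hk0 hre hdisk

/-- On the closed segment joining
`z_I = k/(k²+k_p²) + i·k_p/(k²+k_p²)` and `z_T = k/(k²+k_s²) − i·k_s/(k²+k_s²)`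
(where `k, k_p, k_s` are positive integers), every point `z` satisfies
`Re z ≤ 1/k` and `Re(1/z) ≥ k`. -/
theorem segment_re_bounds (k kp ks : ℕ) (hk : 1 ≤ k) (hkp : 1 ≤ kp) (hks : 1 ≤ ks)
    (z : ℂ)
    (hz : z ∈ segment ℝ
      ((k : ℂ) / (k ^ 2 + kp ^ 2) + Complex.I * kp / (k ^ 2 + kp ^ 2))
      ((k : ℂ) / (k ^ 2 + ks ^ 2) - Complex.I * ks / (k ^ 2 + ks ^ 2))) :
    z.re ≤ 1 / k ∧ (k : ℝ) ≤ (1 / z).re :=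
  segment_re_bounds_general k kp ks hk z hz
end
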